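/- The distance in Γ(d) between a d-dimensional polytope with n vertices and a d-dimensional polytope with m vertices is at most n + m + 4d. -/

import Mathlib

open Set

/-- Points of `ℝ^d`. -/
abbrev Pt (d : ℕ) := Fin d → ℝ

/-- A polytope in `ℝ^d` is the convex hull of a finite set of points. -/
def IsPolytope (d : ℕ) (P : Set (Pt d)) : Prop :=
  ∃ S : Finset (Pt d), P = convexHull ℝ (S : Set (Pt d))

/-- A set is `d`-dimensional (full-dimensional) if its affine hull is all of `ℝ^d`. -/
def FullDim (d : ℕ) (P : Set (Pt d)) : Prop := affineSpan ℝ P = ⊤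

/-- A point `x` can be inserted in `P` when the convex hull of `P ∪ {x}` has as its
vertex set (set of extreme points) exactly the vertex set of `P` together with `x`. -/
def CanInsert (d : ℕ) (P : Set (Pt d)) (x : Pt d) : Prop :=
  Set.extremePoints ℝ (convexHull ℝ (P ∪ {x})) = Set.extremePoints ℝ P ∪ {x}

/-- A vertex `v` of `P` can be deleted from `P` when the convex hull of the remaining
vertices is `d`-dimensional. -/
def CanDelete (d : ℕ) (P : Set (Pt d)) (v : Pt d) : Prop :=
  v ∈ Set.extremePoints ℝ P ∧
    FullDim d (convexHull ℝ (Set.extremePoints ℝ P \ {v}))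

/-- `Q` is obtained from `P` by an insertion move. -/
def InsertMove (d : ℕ) (P Q : Set (Pt d)) : Prop :=
  ∃ x : Pt d, CanInsert d P x ∧ Q = convexHull ℝ (P ∪ {x})

/-- `Q` is obtained from `P` by a deletion move. -/
def DeleteMove (d : ℕ) (P Q : Set (Pt d)) : Prop :=
  ∃ v : Pt d, CanDelete d P v ∧ Q = convexHull ℝ (Set.extremePoints ℝ P \ {v})

/-- Adjacency: one polytope is obtained from the other by inserting a point or
deleting a vertex. -/
def Move (d : ℕ) (P Q : Set (Pt d)) : Prop :=
  InsertMove d P Q ∨ DeleteMove d P Q ∨ InsertMove d Q P ∨ DeleteMove d Q P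

/-- There is a path of at most `n` edges from `P` to `Q` all of whose vertices lie in
the class `C` of polytopes (i.e. `P` and `Q` are at distance at most `n` in the subgraph
induced by `C`). -/
def PathLE (d : ℕ) (C : Set (Set (Pt d))) (P Q : Set (Pt d)) (n : ℕ) : Prop :=
  ∃ (m : ℕ) (f : ℕ → Set (Pt d)), m ≤ n ∧ f 0 = P ∧ f m = Q ∧
    (∀ i ≤ m, f i ∈ C) ∧ ∀ i < m, Move d (f i) (f (i + 1))

/-- The subgraph induced by the class `C` is connected. -/
def ConnectedIn (d : ℕ) (C : Set (Set (Pt d))) : Prop :=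
  ∀ P ∈ C, ∀ Q ∈ C, ∃ n, PathLE d C P Q n

/-- The vertex set of the graph `Γ(d)`: the `d`-dimensional polytopes in `ℝ^d`. -/
def Gamma (d : ℕ) : Set (Set (Pt d)) := {P | IsPolytope d P ∧ FullDim d P}

/-- The number of vertices of a polytope. -/
noncomputable def nVerts (d : ℕ) (P : Set (Pt d)) : ℕ := (Set.extremePoints ℝ P).ncard

/-- A lattice point of `ℝ^d`. -/
def IsLatticePt (d : ℕ) (x : Pt d) : Prop := ∀ i, ∃ z : ℤ, x i = (z : ℝ)

/-- A lattice polytope: all its vertices are lattice points. -/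
def IsLatticePoly (d : ℕ) (P : Set (Pt d)) : Prop :=
  ∀ v ∈ Set.extremePoints ℝ P, IsLatticePt d v

/-- The hypercube `[0,k]^d`. -/
def Cube (d k : ℕ) : Set (Pt d) := {x | ∀ i, x i ∈ Set.Icc (0 : ℝ) (k : ℝ)}

/-- The vertex set of `Λ(d)`: the `d`-dimensional lattice polytopes in `ℝ^d`. -/
def Lambda (d : ℕ) : Set (Set (Pt d)) :=
  {P | IsPolytope d P ∧ FullDim d P ∧ IsLatticePoly d P}

/-- The vertex set of `Λ(d,k)`: the `d`-dimensional lattice polytopes in `[0,k]^d`. -/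
def LambdaK (d k : ℕ) : Set (Set (Pt d)) := {P ∈ Lambda d | P ⊆ Cube d k}

/-- A facet of a polytope `P`: an exposed face of dimension `d-1`. -/
def IsFacet (d : ℕ) (P F : Set (Pt d)) : Prop :=
  IsExposed ℝ P F ∧ F.Nonempty ∧ F ≠ P ∧
    Module.finrank ℝ ↥(vectorSpan ℝ F) = d - 1

/-- `H` is the closed half-space `H_F^-(P)` bounded by the affine hull of the facet `F`
and satisfying `P ∩ H = F`. -/
def BoundingHalfspace (d : ℕ) (P F H : Set (Pt d)) : Prop :=
  ∃ (l : (Pt d) →ₗ[ℝ] ℝ) (c : ℝ), l ≠ 0 ∧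
    H = {x | l x ≤ c} ∧
    (affineSpan ℝ F : Set (Pt d)) = {x | l x = c} ∧
    P ∩ H = F

/-- The cone `C_v(P)`: the intersection of the half-spaces `H_F^-(P)` over all facets
`F` of `P` incident to `v`. -/
def Cone (d : ℕ) (P : Set (Pt d)) (v : Pt d) : Set (Pt d) :=
  {x | ∀ F H : Set (Pt d), IsFacet d P F → v ∈ F → BoundingHalfspace d P F H → x ∈ H}

/-- A set `A` is in convex position: every finite subset of `A` is the vertex set of
a polytope, namely of its own convex hull. -/
def ConvexPosition (d : ℕ) (A : Set (Pt d)) : Prop :=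
  ∀ S : Finset (Pt d), (S : Set (Pt d)) ⊆ A →
    Set.extremePoints ℝ (convexHull ℝ (S : Set (Pt d))) = (S : Set (Pt d))

/-!
Deleting the vertices outside a simplex spanned by some of its vertices takes a polytope with
`n` vertices to that simplex in `n - (d + 1)` moves, all polytopes on the way staying
full-dimensional. Two simplices are then joined by exchanging their vertices one at a time. A
point can be inserted into a simplex when its barycentric coordinates have a negative entry and
at least two positive ones; inserting such a point `x` and then deleting a vertex `b k` with
`x` off the facet opposite `b k` is a flip of length 2. Any point `v` off that facet replaces
`b k` by two flips through an intermediate point, which exists because `d ≥ 2` leaves three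
coordinates to adjust. At most `d + 1` exchanges are needed, so the total length is at most
`(n - d - 1) + 4 (d + 1) + (m - d - 1) ≤ n + m + 4 d`.
-/

lemma Move.symm {d : ℕ} {P Q : Set (Pt d)} (h : Move d P Q) : Move d Q P := by
  unfold Move at *
  tauto

namespace PathLE

variable {d : ℕ} {C : Set (Set (Pt d))} {P Q R : Set (Pt d)} {a b : ℕ}

lemma mono (hab : a ≤ b) (h : PathLE d C P Q a) : PathLE d C P Q b := by
  obtain ⟨m, f, hm, hf⟩ := h
  exact ⟨m, f, hm.trans hab, hf⟩

lemma refl (hP : P ∈ C) : PathLE d C P P 0 :=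
  ⟨0, fun _ => P, le_rfl, rfl, rfl, fun _ _ => hP, fun _ h => absurd h (Nat.not_lt_zero _)⟩

lemma single (hP : P ∈ C) (hQ : Q ∈ C) (h : Move d P Q) : PathLE d C P Q 1 := by
  refine ⟨1, fun i => if i = 0 then P else Q, le_rfl, rfl, rfl, ?_, ?_⟩
  · intro i _
    dsimp only
    split_ifs <;> assumption
  · intro i hi
    obtain rfl : i = 0 := by omega
    simpa using h

lemma symm (h : PathLE d C P Q a) : PathLE d C Q P a := by
  obtain ⟨m, f, hm, h0, hm', hmem, hmove⟩ := h
  refine ⟨m, fun i => f (m - i), hm, by simpa using hm', by simpa using h0,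
    fun i _ => hmem _ (Nat.sub_le m i), fun i hi => ?_⟩
  have hi' : m - i = m - (i + 1) + 1 := by omega
  simpa only [hi'] using (hmove (m - (i + 1)) (by omega)).symm

lemma trans (h₁ : PathLE d C P Q a) (h₂ : PathLE d C Q R b) : PathLE d C P R (a + b) := by
  obtain ⟨m, f, hm, hf0, hfm, hfmem, hfmove⟩ := h₁
  obtain ⟨n, g, hn, hg0, hgn, hgmem, hgmove⟩ := h₂
  have hfg : f m = g 0 := hfm.trans hg0.symm
  refine ⟨m + n, fun i => if i ≤ m then f i else g (i - m), by omega, by simpa using hf0,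
    ?_, fun i _ => ?_, fun i hi => ?_⟩
  · rcases Nat.eq_zero_or_pos n with rfl | hn0
    · simpa [hfm] using hg0.symm.trans hgn
    · simpa [show ¬ m + n ≤ m by omega] using hgn
  · dsimp only
    split_ifs with h
    · exact hfmem i h
    · exact hgmem _ (by omega)
  · by_cases h : i < m
    · simpa [h.le, show i + 1 ≤ m by omega] using hfmove i h
    · have hg := hgmove (i - m) (by omega)
      rw [show i - m + 1 = i + 1 - m by omega] at hg
      by_cases him : i = m
      · subst him
        simpa [hfg] using hg
      · simpa [show ¬ i ≤ m by omega, show ¬ i + 1 ≤ m by omega] using hg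

end PathLE

section Convexity

lemma notMem_convexHull_of_affineMap {E : Type*} [AddCommGroup E] [Module ℝ E] {s : Set E}
    {x : E} (φ : E →ᵃ[ℝ] ℝ) (hs : ∀ y ∈ s, φ y ≤ 0) (hx : 0 < φ x) : x ∉ convexHull ℝ s :=
  fun h => hx.not_ge (convexHull_min hs ((convex_Iic 0).affine_preimage φ) h)

variable {E : Type*} [NormedAddCommGroup E] [NormedSpace ℝ E] {A : Set E}

lemma Set.Finite.convexHull_extremePoints_convexHull (hA : A.Finite) :
    convexHull ℝ ((convexHull ℝ A).extremePoints ℝ) = convexHull ℝ A := by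
  have hext : ((convexHull ℝ A).extremePoints ℝ).Finite :=
    hA.subset extremePoints_convexHull_subset
  rw [← (hext.isCompact_convexHull ℝ).isClosed.closure_eq]
  exact closure_convexHull_extremePoints (hA.isCompact_convexHull ℝ) (convex_convexHull ℝ A)

lemma mem_extremePoints_convexHull_of_notMem (hA : A.Finite) {x : E} (hxA : x ∈ A)
    (hx : x ∉ convexHull ℝ (A \ {x})) : x ∈ (convexHull ℝ A).extremePoints ℝ := by
  by_contra hnot
  have hsub : (convexHull ℝ A).extremePoints ℝ ⊆ A \ {x} := fun y hy =>
    ⟨extremePoints_convexHull_subset hy, by rintro rfl; exact hnot hy⟩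
  refine hx (convexHull_mono hsub ?_)
  rw [hA.convexHull_extremePoints_convexHull]
  exact subset_convexHull ℝ A hxA

lemma extremePoints_convexHull_eq_self (hA : A.Finite)
    (h : ∀ x ∈ A, x ∉ convexHull ℝ (A \ {x})) : (convexHull ℝ A).extremePoints ℝ = A :=
  extremePoints_convexHull_subset.antisymm fun x hx =>
    mem_extremePoints_convexHull_of_notMem hA hx (h x hx)

end Convexity

lemma Set.range_update_eq_insert_image {ι α : Type*} [DecidableEq ι] (f : ι → α) (i : ι)
    (x : α) :
    Set.range (Function.update f i x) = insert x (f '' {j | j ≠ i}) := by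
  ext y
  constructor
  · rintro ⟨j, rfl⟩
    rcases eq_or_ne j i with rfl | hj
    · simp
    · exact Or.inr ⟨j, hj, (Function.update_of_ne hj x f).symm⟩
  · rintro (rfl | ⟨j, hj, rfl⟩)
    · exact ⟨i, Function.update_self i y f⟩
    · exact ⟨j, Function.update_of_ne hj x f⟩

namespace AffineBasis

variable {ι k V P : Type*} [Field k] [AddCommGroup V] [Module k V] [AddTorsor V P]
  (b : AffineBasis ι k P)

lemma notMem_affineSpan_image_ne {i : ι} {x : P} (hx : b.coord i x ≠ 0) :
    x ∉ affineSpan k (b '' {j | j ≠ i}) := fun hmem =>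
  hx (AffineMap.eqOn_affineSpan (f := b.coord i) (g := AffineMap.const k P 0)
    (by rintro _ ⟨j, hj, rfl⟩; exact b.coord_apply_ne (Ne.symm hj)) hmem)

variable [DecidableEq ι]

lemma affineIndependent_update {i : ι} {x : P} (hx : b.coord i x ≠ 0) :
    AffineIndependent k (Function.update b i x) := by
  have hne : Set.EqOn (Function.update b i x) b {j | j ≠ i} := fun j hj =>
    Function.update_of_ne hj x b
  refine AffineIndependent.affineIndependent_of_notMem_span (i := i) ?_ ?_
  · have := b.ind.comp_embedding (Function.Embedding.subtype (· ≠ i))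
    convert this using 1
    funext j
    exact hne j.2
  · rw [Function.update_self, hne.image_eq]
    exact b.notMem_affineSpan_image_ne hx

variable [Fintype ι]

/-- Exchange `b i` for `x`; the hypothesis says that `x` is off the facet opposite `b i`. -/
noncomputable def replace (i : ι) (x : P) (hx : b.coord i x ≠ 0) : AffineBasis ι k P where
  toFun := Function.update b i x
  ind' := b.affineIndependent_update hx
  tot' := by
    have := b.finiteDimensional
    exact (b.affineIndependent_update hx).affineSpan_eq_top_iff_card_eq_finrank_add_one.2
      b.card_eq_finrank_add_one

variable {b} {i : ι} {x : P} (hx : b.coord i x ≠ 0)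

@[simp]
lemma coe_replace : ⇑(b.replace i x hx) = Function.update b i x := rfl

lemma range_replace : Set.range (b.replace i x hx) = insert x (Set.range b \ {b i}) := by
  rw [coe_replace, Set.range_update_eq_insert_image, ← Set.image_univ, ← Set.image_singleton,
    ← Set.image_sdiff b.ind.injective]
  congr 2
  ext
  simp

lemma coord_replace (j : ι) (v : P) :
    (b.replace i x hx).coord j v =
      if j = i then b.coord i v / b.coord i x
      else b.coord j v - b.coord i v / b.coord i x * b.coord j x := by
  split_ifs with hj
  · subst hj
    suffices (b.replace j x hx).coord j = (b.coord j x)⁻¹ • b.coord j by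
      rw [this, AffineMap.coe_smul, Pi.smul_apply, smul_eq_mul, div_eq_inv_mul]
    refine AffineMap.ext_on (b.replace j x hx).tot ?_
    rintro _ ⟨l, rfl⟩
    rw [coord_apply]
    rcases eq_or_ne l j with rfl | hl
    · simp [hx]
    · simp [b.coord_apply_ne hl.symm, hl, hl.symm]
  · suffices (b.replace i x hx).coord j = b.coord j - (b.coord j x / b.coord i x) • b.coord i by
      rw [this, AffineMap.coe_sub, AffineMap.coe_smul, Pi.sub_apply, Pi.smul_apply, smul_eq_mul]
      ring
    refine AffineMap.ext_on (b.replace i x hx).tot ?_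
    rintro _ ⟨l, rfl⟩
    rw [coord_apply]
    rcases eq_or_ne l i with rfl | hl
    · simp [hj, hx]
    · rcases eq_or_ne l j with rfl | hlj
      · simp [b.coord_apply_ne hl.symm, hl]
      · simp [b.coord_apply_ne hl.symm, b.coord_apply_ne (Ne.symm hlj), hl, Ne.symm hlj]

end AffineBasis

/-- Barycentric coordinates of a point that can be inserted in a simplex: the point lies outside
the simplex, and no vertex falls into the convex hull of the new point and the other vertices. -/
def Flippable {ι : Type*} (w : ι → ℝ) : Prop :=
  (∃ i, w i < 0) ∧ ∃ j₁ j₂, j₁ ≠ j₂ ∧ 0 < w j₁ ∧ 0 < w j₂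

namespace AffineBasis

variable {ι E : Type*} [NormedAddCommGroup E] [NormedSpace ℝ E] (b : AffineBasis ι ℝ E)

lemma notMem_convexHull_range {x : E} {i : ι} (hi : b.coord i x < 0) :
    x ∉ convexHull ℝ (Set.range b) := by
  rw [b.convexHull_eq_nonneg_coord]
  exact fun h => hi.not_ge (h i)

variable [Fintype ι]

lemma extremePoints_convexHull_range :
    (convexHull ℝ (Set.range b)).extremePoints ℝ = Set.range b := by
  refine extremePoints_convexHull_eq_self (Set.finite_range b) ?_
  rintro _ ⟨i, rfl⟩
  refine notMem_convexHull_of_affineMap (b.coord i) ?_ (by simp)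
  rintro _ ⟨⟨j, rfl⟩, hj⟩
  rw [b.coord_apply_ne fun h => hj (by rw [h]; rfl)]

lemma extremePoints_convexHull_insert {x : E} (hx : Flippable fun i => b.coord i x) :
    (convexHull ℝ (insert x (Set.range b))).extremePoints ℝ = insert x (Set.range b) := by
  obtain ⟨⟨i₀, hi₀⟩, j₁, j₂, hj, hj₁, hj₂⟩ := hx
  refine extremePoints_convexHull_eq_self ((Set.finite_range b).insert x) ?_
  rintro _ (rfl | ⟨i, rfl⟩)
  · exact fun h => b.notMem_convexHull_range hi₀
      (convexHull_mono (Set.sdiff_singleton_subset_iff.2 le_rfl) h)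
  -- `b i` is cut off by `coord i - c • coord j` for a positive coordinate `j ≠ i` of `x`
  obtain ⟨j, hji, hj⟩ : ∃ j, j ≠ i ∧ 0 < b.coord j x := by
    rcases eq_or_ne j₁ i with rfl | h
    · exact ⟨j₂, hj.symm, hj₂⟩
    · exact ⟨j₁, h, hj₁⟩
  set c := |b.coord i x| / b.coord j x
  have hc : 0 ≤ c := by positivity
  refine notMem_convexHull_of_affineMap (b.coord i - c • b.coord j) ?_
    (by simp [b.coord_apply_ne hji])
  rintro _ ⟨rfl | ⟨l, rfl⟩, hl⟩
  · simp [c, div_mul_cancel₀ _ hj.ne', le_abs_self]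
  · have hli : l ≠ i := fun h => hl (by rw [h]; rfl)
    rcases eq_or_ne l j with rfl | hlj
    · simp [b.coord_apply_ne hli.symm, hc]
    · simp [b.coord_apply_ne hli.symm, b.coord_apply_ne hlj.symm]

end AffineBasis

namespace Gamma

variable {d : ℕ} {P : Set (Pt d)}

lemma convexHull_mem {A : Set (Pt d)} (hA : A.Finite) (hspan : affineSpan ℝ A = ⊤) :
    convexHull ℝ A ∈ Gamma d :=
  ⟨⟨hA.toFinset, by rw [Set.Finite.coe_toFinset]⟩, by rw [FullDim, affineSpan_convexHull, hspan]⟩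

lemma finite_extremePoints (hP : P ∈ Gamma d) : (P.extremePoints ℝ).Finite := by
  obtain ⟨S, rfl⟩ := hP.1
  exact S.finite_toSet.subset extremePoints_convexHull_subset

lemma convexHull_extremePoints (hP : P ∈ Gamma d) : convexHull ℝ (P.extremePoints ℝ) = P := by
  obtain ⟨S, rfl⟩ := hP.1
  exact S.finite_toSet.convexHull_extremePoints_convexHull

lemma affineSpan_extremePoints (hP : P ∈ Gamma d) : affineSpan ℝ (P.extremePoints ℝ) = ⊤ := by
  rw [← affineSpan_convexHull, convexHull_extremePoints hP]
  exact hP.2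

lemma exists_affineBasis_range_subset (hP : P ∈ Gamma d) :
    ∃ b : AffineBasis (Fin (d + 1)) ℝ (Pt d), Set.range b ⊆ P.extremePoints ℝ := by
  obtain ⟨s, hs, b, hb⟩ := AffineBasis.exists_affine_subbasis (affineSpan_extremePoints hP)
  have : Fintype s := ((finite_extremePoints hP).subset hs).fintype
  have hcard : Fintype.card s = d + 1 := by
    rw [b.card_eq_finrank_add_one, Module.finrank_fin_fun]
  refine ⟨b.reindex (Fintype.equivFinOfCardEq hcard), ?_⟩
  rintro _ ⟨i, rfl⟩
  rw [AffineBasis.reindex_apply, hb]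
  exact hs (Subtype.prop _)

lemma pathLE_convexHull_union {t : Set (Pt d)} (ht : t.Finite) (hspan : affineSpan ℝ t = ⊤)
    (u : Finset (Pt d)) (hu : ∀ x ∈ ↑u ∪ t, x ∉ convexHull ℝ ((↑u ∪ t) \ {x})) :
    PathLE d (Gamma d) (convexHull ℝ (↑u ∪ t)) (convexHull ℝ t) u.card := by
  induction u using Finset.induction_on with
  | empty => simpa using PathLE.refl (convexHull_mem ht hspan)
  | insert a u ha ih =>
    rw [Finset.coe_insert, Set.insert_union] at hu ⊢
    have hfin : (↑u ∪ t).Finite := u.finite_toSet.union ht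
    have hspan' : affineSpan ℝ (↑u ∪ t) = ⊤ :=
      top_le_iff.1 (hspan ▸ affineSpan_mono ℝ Set.subset_union_right)
    have path := ih fun x hx h => hu x (Or.inr hx)
      (convexHull_mono (Set.sdiff_subset_sdiff_left (Set.subset_insert a _)) h)
    rw [Finset.card_insert_of_notMem ha, add_comm]
    by_cases hat : a ∈ t
    · rw [Set.insert_eq_of_mem (Set.mem_union_right _ hat)]
      exact path.mono (Nat.le_add_left _ _)
    have hau : a ∉ ↑u ∪ t := by simp [ha, hat]
    have hext := extremePoints_convexHull_eq_self (hfin.insert a) hu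
    refine PathLE.trans (PathLE.single (convexHull_mem (hfin.insert a) ?_)
      (convexHull_mem hfin hspan') (Or.inr (Or.inl ⟨a, ⟨?_, ?_⟩, ?_⟩))) path
    · exact top_le_iff.1 (hspan' ▸ affineSpan_mono ℝ (Set.subset_insert a _))
    · rw [hext]
      exact Set.mem_insert a _
    · rw [hext, Set.insert_sdiff_self_of_notMem hau, FullDim, affineSpan_convexHull, hspan']
    · rw [hext, Set.insert_sdiff_self_of_notMem hau]

lemma exists_pathLE_simplex (hP : P ∈ Gamma d) :
    ∃ b : AffineBasis (Fin (d + 1)) ℝ (Pt d), d + 1 ≤ nVerts d P ∧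
      PathLE d (Gamma d) P (convexHull ℝ (Set.range b)) (nVerts d P - (d + 1)) := by
  obtain ⟨b, hb⟩ := exists_affineBasis_range_subset hP
  have hV := finite_extremePoints hP
  have hrange : (Set.range b).ncard = d + 1 := by
    rw [Set.ncard_range_of_injective b.ind.injective, Nat.card_eq_fintype_card, Fintype.card_fin]
  set u := (hV.sdiff (t := Set.range b)).toFinset
  have hunion : ↑u ∪ Set.range b = P.extremePoints ℝ := by
    rw [Set.Finite.coe_toFinset, Set.sdiff_union_of_subset hb]
  have hcard : u.card = nVerts d P - (d + 1) := by
    rw [← Set.ncard_coe_finset, Set.Finite.coe_toFinset, Set.ncard_sdiff hb, hrange, nVerts]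
  refine ⟨b, hrange ▸ Set.ncard_le_ncard hb hV, ?_⟩
  have hconv : Convex ℝ P := convexHull_extremePoints hP ▸ convex_convexHull ℝ _
  have path := pathLE_convexHull_union (Set.finite_range b) b.tot u (by
    rw [hunion]
    exact convexIndependent_set_iff_notMem_convexHull_sdiff.1 hconv.convexIndependent_extremePoints)
  rwa [hunion, convexHull_extremePoints hP, hcard] at path

end Gamma

section Rebase

variable {ι : Type*} [Fintype ι] [DecidableEq ι] {β : ι → ℝ} {k p q : ι}

lemma exists_flippable_rebase_of_pos (hpk : p ≠ k) (hqk : q ≠ k) (hqp : q ≠ p) (hk : 0 < β k) :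
    ∃ η : ι → ℝ, ∑ i, η i = 1 ∧ η k ≠ 0 ∧ Flippable η ∧
      Flippable fun j => if j = k then β k / η k else β j - β k / η k * η j := by
  set T := 1 + |β k| + |β p| + |β q|
  have hT : 0 < T := by positivity
  have hkT : β k / T ≤ 1 := by
    rw [div_le_one hT]
    linarith [le_abs_self (β k), abs_nonneg (β p), abs_nonneg (β q)]
  set η : ι → ℝ := Pi.single k (β k / T) + Pi.single p (-1) + Pi.single q (2 - β k / T)
  have hηk : η k = β k / T := by simp [η, hpk.symm, hqk.symm]
  have hηp : η p = -1 := by simp [η, hpk, hqp.symm]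
  have hηq : η q = 2 - β k / T := by simp [η, hqk, hqp]
  have hμ : β k / η k = T := by rw [hηk]; field_simp
  refine ⟨η, ?_, by rw [hηk]; positivity, ⟨⟨p, by rw [hηp]; norm_num⟩, k, q, hqk.symm,
    by rw [hηk]; positivity, by rw [hηq]; linarith⟩, ⟨⟨q, ?_⟩, k, p, hpk.symm, ?_, ?_⟩⟩
  · simp [η, Finset.sum_add_distrib]
    ring
  · simp only [hqk, if_false, hμ, hηq]
    field_simp
    linarith [le_abs_self (β q), le_abs_self (β k), abs_nonneg (β p)]
  · simpa [hμ] using hT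
  · simp only [hpk, if_false, hμ, hηp]
    linarith [neg_abs_le (β p), abs_nonneg (β k), abs_nonneg (β q)]

lemma exists_flippable_rebase_of_neg (hpk : p ≠ k) (hqk : q ≠ k) (hqp : q ≠ p) (hk : β k < 0)
    (hp : 0 < β p) :
    ∃ η : ι → ℝ, ∑ i, η i = 1 ∧ η k ≠ 0 ∧ Flippable η ∧
      Flippable fun j => if j = k then β k / η k else β j - β k / η k * η j := by
  set T := 1 + |β k| + |β p| + |β q|
  have hT : 0 < T := by positivity
  have hk0 : β k ≠ 0 := hk.ne
  set η : ι → ℝ := Pi.single k (-β k / T) + Pi.single p (-β p / (2 * T)) +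
    Pi.single q (1 + β k / T + β p / (2 * T))
  have hηk : η k = -β k / T := by simp [η, hpk.symm, hqk.symm]
  have hηp : η p = -β p / (2 * T) := by simp [η, hpk, hqp.symm]
  have hηq : η q = 1 + β k / T + β p / (2 * T) := by simp [η, hqk, hqp]
  have hμ : β k / η k = -T := by rw [hηk]; field_simp
  have hTk : 1 + |β q| ≤ T + β k := by linarith [neg_abs_le (β k), abs_nonneg (β p)]
  refine ⟨η, ?_, ?_, ⟨⟨p, ?_⟩, k, q, hqk.symm, ?_, ?_⟩, ⟨⟨k, ?_⟩, p, q, hqp.symm, ?_, ?_⟩⟩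
  · simp [η, Finset.sum_add_distrib]
    ring
  · rw [hηk]
    exact div_ne_zero (neg_ne_zero.2 hk.ne) hT.ne'
  · rw [hηp, neg_div]
    exact neg_neg_of_pos (by positivity)
  · rw [hηk]
    exact div_pos (neg_pos.2 hk) hT
  · rw [hηq]
    have : 0 < (T + β k) / T + β p / (2 * T) := by
      have := abs_nonneg (β q)
      have : 0 < T + β k := by linarith
      positivity
    field_simp at this ⊢
    linarith
  · simpa [hμ] using hT
  · simp only [hpk, if_false, hμ, hηp]
    field_simp
    linarith
  · simp only [hqk, if_false, hμ, hηq]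
    field_simp
    linarith [neg_abs_le (β q)]

/-- `β` are the coordinates of a target point, `η` those of an intermediate point, and the last
family those of the target once the `k`-th vertex is exchanged for the intermediate point
(`AffineBasis.coord_replace`). -/
lemma exists_flippable_rebase (hι : 2 < Fintype.card ι) (hβ : ∑ i, β i = 1) (hk : β k ≠ 0) :
    ∃ η : ι → ℝ, ∑ i, η i = 1 ∧ η k ≠ 0 ∧ Flippable η ∧
      Flippable fun j => if j = k then β k / η k else β j - β k / η k * η j := by
  have hthird : ∀ p, ∃ q, q ≠ k ∧ q ≠ p := fun p => by
    obtain ⟨q, -, hq⟩ := Finset.exists_mem_notMem_of_card_lt_card (s := {k, p})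
      (t := Finset.univ) (by rw [Finset.card_univ]; exact Finset.card_le_two.trans_lt hι)
    simp only [Finset.mem_insert, Finset.mem_singleton, not_or] at hq
    exact ⟨q, hq⟩
  rcases hk.lt_or_gt with hneg | hpos
  · obtain ⟨p, hp⟩ : ∃ p, 0 < β p := by
      by_contra! h
      linarith [Finset.sum_nonpos fun i (_ : i ∈ Finset.univ) => h i]
    obtain ⟨q, hqk, hqp⟩ := hthird p
    exact exists_flippable_rebase_of_neg (fun h => by subst h; linarith) hqk hqp hneg hp
  · obtain ⟨p, hpk, -⟩ := hthird k
    obtain ⟨q, hqk, hqp⟩ := hthird p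
    exact exists_flippable_rebase_of_pos hpk hqk hqp hpos

end Rebase

lemma AffineBasis.sum_coord_mul_apply {ι k V P : Type*} [Fintype ι] [Field k] [AddCommGroup V]
    [Module k V] [AddTorsor V P] (b : AffineBasis ι k P) (f : P →ᵃ[k] k) (x : P) :
    ∑ i, b.coord i x * f (b i) = f x := by
  conv_rhs => rw [← b.affineCombination_coord_eq_self x]
  rw [Finset.map_affineCombination _ _ _ (b.sum_coord_apply_eq_one x),
    Finset.affineCombination_eq_linear_combination _ _ _ (b.sum_coord_apply_eq_one x)]
  rfl

lemma AffineBasis.exists_coord_ne_zero_of_notMem_range {ι k V P : Type*} [Fintype ι] [Field k]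
    [AddCommGroup V] [Module k V] [AddTorsor V P] (b c : AffineBasis ι k P) {i : ι}
    (hi : c i ∉ Set.range b) : ∃ l, b l ∉ Set.range c ∧ b.coord l (c i) ≠ 0 := by
  have hsum := b.sum_coord_mul_apply (c.coord i) (c i)
  rw [c.coord_apply_eq] at hsum
  obtain ⟨l, -, hl⟩ := Finset.exists_ne_zero_of_sum_ne_zero (hsum ▸ one_ne_zero)
  refine ⟨l, ?_, left_ne_zero_of_mul hl⟩
  rintro ⟨j, hj⟩
  rcases eq_or_ne i j with rfl | hij
  · exact hi ⟨l, hj.symm⟩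
  · exact right_ne_zero_of_mul hl (hj ▸ c.coord_apply_ne hij)

section Flips

variable {d : ℕ} {ι : Type*} [Fintype ι] [DecidableEq ι]

lemma pathLE_convexHull_replace_of_flippable (b : AffineBasis ι ℝ (Pt d)) {k : ι} {x : Pt d}
    (hx : b.coord k x ≠ 0) (hflip : Flippable fun i => b.coord i x) :
    PathLE d (Gamma d) (convexHull ℝ (Set.range b))
      (convexHull ℝ (Set.range (b.replace k x hx))) 2 := by
  obtain ⟨i₀, hi₀⟩ := hflip.1
  have hxb : x ≠ b k := fun h =>
    b.notMem_convexHull_range hi₀ (subset_convexHull ℝ _ ⟨k, h.symm⟩)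
  have hext := b.extremePoints_convexHull_insert hflip
  have hinsert : convexHull ℝ (convexHull ℝ (Set.range b) ∪ {x}) =
      convexHull ℝ (insert x (Set.range b)) := by
    rw [convexHull_convexHull_union_left, Set.union_singleton]
  have hdelete : insert x (Set.range b) \ {b k} = Set.range (b.replace k x hx) := by
    rw [AffineBasis.range_replace, Set.insert_sdiff_singleton_comm hxb]
  have hQ : convexHull ℝ (insert x (Set.range b)) ∈ Gamma d :=
    Gamma.convexHull_mem ((Set.finite_range b).insert x)
      (top_le_iff.1 (b.tot ▸ affineSpan_mono ℝ (Set.subset_insert x _)))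
  refine PathLE.trans (a := 1) (b := 1)
    (PathLE.single (Gamma.convexHull_mem (Set.finite_range b) b.tot) hQ
      (Or.inl ⟨x, ?_, hinsert.symm⟩))
    (PathLE.single hQ (Gamma.convexHull_mem (Set.finite_range _) (b.replace k x hx).tot)
      (Or.inr (Or.inl ⟨b k, ⟨?_, ?_⟩, by rw [hext, hdelete]⟩)))
  · rw [CanInsert, hinsert, hext, b.extremePoints_convexHull_range, Set.union_singleton]
  · rw [hext]
    exact Set.mem_insert_of_mem _ ⟨k, rfl⟩
  · rw [hext, hdelete, FullDim, affineSpan_convexHull]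
    exact (b.replace k x hx).tot

lemma pathLE_convexHull_replace (hι : 2 < Fintype.card ι) (b : AffineBasis ι ℝ (Pt d))
    {k : ι} {v : Pt d} (hv : b.coord k v ≠ 0) :
    PathLE d (Gamma d) (convexHull ℝ (Set.range b))
      (convexHull ℝ (Set.range (b.replace k v hv))) 4 := by
  obtain ⟨η, hη, hηk, hflip, hflip'⟩ :=
    exists_flippable_rebase hι (b.sum_coord_apply_eq_one v) hv
  set y := Finset.univ.affineCombination ℝ b η
  have hy : ∀ i, b.coord i y = η i := fun i =>
    b.coord_apply_combination_of_mem (Finset.mem_univ i) hη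
  have hyk : b.coord k y ≠ 0 := (hy k).symm ▸ hηk
  have hcoord : ∀ j, (b.replace k y hyk).coord j v =
      if j = k then b.coord k v / η k else b.coord j v - b.coord k v / η k * η j := by
    intro j
    simp only [AffineBasis.coord_replace, hy]
  have hvk : (b.replace k y hyk).coord k v ≠ 0 := by
    rw [hcoord, if_pos rfl]
    exact div_ne_zero hv hηk
  have hb : (b.replace k y hyk).replace k v hvk = b.replace k v hv :=
    AffineBasis.ext (Function.update_idem _ _ _)
  have path := (pathLE_convexHull_replace_of_flippable b hyk (by simpa only [hy])).trans
    (pathLE_convexHull_replace_of_flippable (b.replace k y hyk) hvk (by simpa only [hcoord]))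
  rwa [hb] at path

lemma pathLE_convexHull_range (hι : 2 < Fintype.card ι) (b c : AffineBasis ι ℝ (Pt d)) :
    PathLE d (Gamma d) (convexHull ℝ (Set.range b)) (convexHull ℝ (Set.range c))
      (4 * (Set.range c \ Set.range b).ncard) := by
  induction hN : (Set.range c \ Set.range b).ncard generalizing b with
  | zero =>
    have hsub : Set.range c ⊆ Set.range b :=
      Set.sdiff_eq_empty.1 ((Set.ncard_eq_zero (Set.finite_range c).sdiff).1 hN)
    have hcard : (Set.range b).ncard = (Set.range c).ncard := by
      rw [Set.ncard_range_of_injective b.ind.injective,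
        Set.ncard_range_of_injective c.ind.injective]
    rw [Set.eq_of_subset_of_ncard_le hsub hcard.le (Set.finite_range b)]
    exact PathLE.refl (Gamma.convexHull_mem (Set.finite_range b) b.tot)
  | succ N ih =>
    obtain ⟨_, ⟨i, rfl⟩, hi⟩ :=
      Set.nonempty_of_ncard_ne_zero (by rw [hN]; exact N.succ_ne_zero)
    obtain ⟨l, hl, hli⟩ := b.exists_coord_ne_zero_of_notMem_range c hi
    have hdiff : Set.range c \ Set.range (b.replace l (c i) hli) =
        (Set.range c \ Set.range b) \ {c i} := by
      rw [AffineBasis.range_replace]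
      ext z
      simp only [Set.mem_sdiff, Set.mem_insert_iff, Set.mem_singleton_iff, not_or, not_and,
        not_not]
      constructor
      · rintro ⟨hz, hzi, hzb⟩
        exact ⟨⟨hz, fun h => hl (hzb h ▸ hz)⟩, hzi⟩
      · rintro ⟨⟨hz, hzb⟩, hzi⟩
        exact ⟨hz, hzi, fun h => absurd h hzb⟩
    have hN' : (Set.range c \ Set.range (b.replace l (c i) hli)).ncard = N := by
      have hci : c i ∈ Set.range c \ Set.range b := ⟨⟨i, rfl⟩, hi⟩
      rw [hdiff, Set.ncard_sdiff_singleton_of_mem hci, hN, Nat.add_sub_cancel]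
    rw [mul_add, mul_one, add_comm]
    exact (pathLE_convexHull_replace hι b hli).trans (ih _ hN')

end Flips

/-- the distance in `Γ(d)` between a polytope with `n` vertices and a
polytope with `m` vertices is at most `n + m + 4d`. -/
theorem stmt_7 (d n m : ℕ) (hd : 2 ≤ d) (P Q : Set (Pt d))
    (hP : P ∈ Gamma d) (hQ : Q ∈ Gamma d)
    (hn : nVerts d P = n) (hm : nVerts d Q = m) :
    PathLE d (Gamma d) P Q (n + m + 4 * d) := by
  obtain ⟨b, hPn, hPb⟩ := Gamma.exists_pathLE_simplex hP
  obtain ⟨c, hQn, hQc⟩ := Gamma.exists_pathLE_simplex hQ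
  have hι : 2 < Fintype.card (Fin (d + 1)) := by rw [Fintype.card_fin]; omega
  have hbc := pathLE_convexHull_range hι b c
  have hdiff : (Set.range c \ Set.range b).ncard ≤ d + 1 := by
    have := Set.ncard_le_ncard (Set.sdiff_subset (t := Set.range b)) (Set.finite_range c)
    rwa [Set.ncard_range_of_injective c.ind.injective, Nat.card_eq_fintype_card,
      Fintype.card_fin] at this
  refine ((hPb.trans hbc).trans hQc.symm).mono ?_
  omega
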